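/- Block lower bound for constant switching costs: assume every g_ij is a constant. Then for the optimal strategy (δ*,u*) and every n ≥ 1, almost surely Σ_{k=1}^{nm} g_{u*_{k−1}u*_k} 1_{[τ*_k<T]} ≥ α n 1_{[τ*_{nm}<T]}. -/

import Mathlib

/-!
Constant costs satisfying the strict triangle inequality make the cost of any chain of switches
at least the cost of the direct switch. A block of `m` consecutive switches visits `m + 1` modes,
so by pigeonhole it contains a cycle `i → j → ⋯ → i` of genuine switches, whose cost is at least
`g_ij + g_ji > α`. On `[τ*_{nm} < T]` every one of the first `nm` switches of the optimal strategy
is genuine, and the first `nm` switches split into `n` such blocks.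
-/

open MeasureTheory Set Filter
open scoped ENNReal

noncomputable section

namespace Switching

/-- Maximum of `f` over the indices `j ≠ i` (the inter-connected obstacle). -/
def maxNe {m : ℕ} (i : Fin m) (f : Fin m → ℝ) : ℝ :=
  ⨆ j : {j : Fin m // j ≠ i}, f (j : Fin m)

variable {Ω : Type*}

/-- The payoff functional `∫_t^τ ψ_i(s,X_s) ds + max_{j≠i}(-g_{ij}(τ,X_τ) + Y^j_τ) 1_{[τ<T]}`
appearing in the Snell envelope characterization of the value processes. -/
def reward {k m : ℕ} (T : ℝ) (X : ℝ → Ω → EuclideanSpace ℝ (Fin k))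
    (ψ : Fin m → ℝ → EuclideanSpace ℝ (Fin k) → ℝ)
    (g : Fin m → Fin m → ℝ → EuclideanSpace ℝ (Fin k) → ℝ)
    (Y : Fin m → ℝ → Ω → ℝ)
    (i : Fin m) (t : ℝ) (τ : Ω → ℝ) (ω : Ω) : ℝ :=
  (∫ s in Ioc t (τ ω), ψ i s (X s ω)) +
    indicator {ω' | τ ω' < T}
      (fun ω' => maxNe i fun j => -(g i j (τ ω') (X (τ ω') ω')) + Y j (τ ω') ω') ω

/-- `Y` is the system of Snell-envelope value processes:  for every mode `i` and every
`t ∈ [0,T]`, `Y^i_t` is (a.s.) the least `F_t`-measurable random variable dominating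
`E[∫_t^τ ψ_i(s,X_s) ds + max_{j≠i}(-g_{ij}(τ,X_τ)+Y^j_τ) 1_{[τ<T]} | F_t]` over all
stopping times `t ≤ τ ≤ T`. -/
def SnellSystem {m0 : MeasurableSpace Ω} {k m : ℕ} (T : ℝ) (μ : Measure Ω)
    (ℱ : Filtration ℝ m0) (X : ℝ → Ω → EuclideanSpace ℝ (Fin k))
    (ψ : Fin m → ℝ → EuclideanSpace ℝ (Fin k) → ℝ)
    (g : Fin m → Fin m → ℝ → EuclideanSpace ℝ (Fin k) → ℝ)
    (Y : Fin m → ℝ → Ω → ℝ) : Prop :=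
  ∀ i : Fin m, ∀ t ∈ Icc (0 : ℝ) T,
    (∀ τ : Ω → ℝ, IsStoppingTime ℱ (fun ω => (τ ω : WithTop ℝ)) → (∀ ω, τ ω ∈ Icc t T) →
      ∀ᵐ ω ∂μ, (μ[reward T X ψ g Y i t τ | ℱ t]) ω ≤ Y i t ω) ∧
    (∀ Z : Ω → ℝ, Measurable[ℱ t] Z →
      (∀ τ : Ω → ℝ, IsStoppingTime ℱ (fun ω => (τ ω : WithTop ℝ)) → (∀ ω, τ ω ∈ Icc t T) →
        ∀ᵐ ω ∂μ, (μ[reward T X ψ g Y i t τ | ℱ t]) ω ≤ Z ω) →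
      ∀ᵐ ω ∂μ, Y i t ω ≤ Z ω)

/-- An admissible switching strategy: a nondecreasing sequence of `[0,T]`-valued stopping
times `τ_n` (with the convention `τ_0 = 0`) together with `F_{τ_n}`-measurable mode choices
`ξ_n` (`ξ_0` being the initial mode). -/
structure Strategy {m0 : MeasurableSpace Ω} (T : ℝ) (ℱ : Filtration ℝ m0) (m : ℕ) where
  τ : ℕ → Ω → ℝ
  ξ : ℕ → Ω → Fin m
  τ_zero : ∀ ω, τ 0 ω = 0
  τ_mono : ∀ ω, Monotone fun n => τ n ω
  τ_mem : ∀ n ω, τ n ω ∈ Icc (0 : ℝ) T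
  τ_stop : ∀ n, IsStoppingTime ℱ (fun ω => (τ n ω : WithTop ℝ))
  ξ_meas : ∀ n j, MeasurableSet[(τ_stop n).measurableSpace] {ω | ξ n ω = j}

variable {m0 : MeasurableSpace Ω} {T : ℝ} {ℱ : Filtration ℝ m0} {k m : ℕ}

/-- The mode indicator process `u_t` of a strategy: `u_t = ξ_n` on `(τ_n, τ_{n+1}]`
(and `u_t = ξ_0` on `[0, τ_1]`). -/
def Strategy.mode (S : Strategy T ℱ m) (t : ℝ) (ω : Ω) : Fin m :=
  S.ξ (sSup {n | S.τ n ω < t}) ω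

/-- The `n`-th switching cost `g_{ξ_{n-1} ξ_n}(τ_n, X_{τ_n}) 1_{[τ_n < T]}` (indexed so that
`cost g X n` is the cost of the `(n+1)`-st switch). -/
def Strategy.cost (S : Strategy T ℱ m)
    (g : Fin m → Fin m → ℝ → EuclideanSpace ℝ (Fin k) → ℝ)
    (X : ℝ → Ω → EuclideanSpace ℝ (Fin k)) (n : ℕ) (ω : Ω) : ℝ :=
  indicator {ω' | S.τ (n + 1) ω' < T}
    (fun ω' => g (S.ξ n ω') (S.ξ (n + 1) ω') (S.τ (n + 1) ω') (X (S.τ (n + 1) ω') ω')) ω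

/-- The reverse switching cost `g_{ξ_n ξ_{n-1}}(τ_n, X_{τ_n}) 1_{[τ_n < T]}`. -/
def Strategy.revCost (S : Strategy T ℱ m)
    (g : Fin m → Fin m → ℝ → EuclideanSpace ℝ (Fin k) → ℝ)
    (X : ℝ → Ω → EuclideanSpace ℝ (Fin k)) (n : ℕ) (ω : Ω) : ℝ :=
  indicator {ω' | S.τ (n + 1) ω' < T}
    (fun ω' => g (S.ξ (n + 1) ω') (S.ξ n ω') (S.τ (n + 1) ω') (X (S.τ (n + 1) ω') ω')) ω

/-- Total switching cost, as an extended nonnegative real (so that infinite total cost is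
represented faithfully). -/
def Strategy.costENN (S : Strategy T ℱ m)
    (g : Fin m → Fin m → ℝ → EuclideanSpace ℝ (Fin k) → ℝ)
    (X : ℝ → Ω → EuclideanSpace ℝ (Fin k)) (ω : Ω) : ℝ≥0∞ :=
  ∑' n : ℕ, ENNReal.ofReal (S.cost g X n ω)

/-- The expected total profit `J(δ,ξ)` of a strategy. -/
def profit (μ : Measure Ω) (X : ℝ → Ω → EuclideanSpace ℝ (Fin k))
    (ψ : Fin m → ℝ → EuclideanSpace ℝ (Fin k) → ℝ)
    (g : Fin m → Fin m → ℝ → EuclideanSpace ℝ (Fin k) → ℝ)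
    (S : Strategy T ℱ m) : ℝ :=
  ∫ ω, ((∫ s in Ioc (0 : ℝ) T, ψ (S.mode s ω) s (X s ω)) - ∑' n : ℕ, S.cost g X n ω) ∂μ

/-- The candidate optimal strategy `(δ*, u*)` built from the value processes `Y`:
`τ*_{n+1}` is the first time after `τ*_n` at which the current value process touches its
inter-connected obstacle (truncated at `T`), and the new mode attains the maximum there. -/
structure OptStrat (T : ℝ) (ℱ : Filtration ℝ m0)
    (X : ℝ → Ω → EuclideanSpace ℝ (Fin k))
    (g : Fin m → Fin m → ℝ → EuclideanSpace ℝ (Fin k) → ℝ)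
    (Y : Fin m → ℝ → Ω → ℝ) (i0 : Fin m) extends Strategy T ℱ m where
  start : ∀ ω, ξ 0 ω = i0
  hitting : ∀ n ω, τ (n + 1) ω =
    min (sInf {s : ℝ | τ n ω ≤ s ∧
      Y (ξ n ω) s ω = maxNe (ξ n ω) fun j => -(g (ξ n ω) j s (X s ω)) + Y j s ω}) T
  switch_ne : ∀ n ω, τ (n + 1) ω < T → ξ (n + 1) ω ≠ ξ n ω
  switch_attain : ∀ n ω, τ (n + 1) ω < T →
    Y (ξ n ω) (τ (n + 1) ω) ω =
      -(g (ξ n ω) (ξ (n + 1) ω) (τ (n + 1) ω) (X (τ (n + 1) ω) ω)) +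
        Y (ξ (n + 1) ω) (τ (n + 1) ω) ω

/-- The standing hypotheses of the optimal multi-modes switching problem. -/
structure Hyps {m0 : MeasurableSpace Ω} {k m : ℕ} (T α : ℝ) (μ : Measure Ω)
    (ℱ : Filtration ℝ m0) (X : ℝ → Ω → EuclideanSpace ℝ (Fin k))
    (ψ : Fin m → ℝ → EuclideanSpace ℝ (Fin k) → ℝ)
    (g : Fin m → Fin m → ℝ → EuclideanSpace ℝ (Fin k) → ℝ)
    (Y : Fin m → ℝ → Ω → ℝ) : Prop where
  prob : IsProbabilityMeasure μ
  right_cont : ∀ t : ℝ, ℱ t = ⨅ s : {s : ℝ // t < s}, ℱ (s : ℝ)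
  X_cont : ∀ ω, ContinuousOn (fun t => X t ω) (Icc 0 T)
  X_adapted : ∀ t : ℝ, Measurable[ℱ t] (X t)
  ψ_cont : ∀ i, ContinuousOn (fun p : ℝ × EuclideanSpace ℝ (Fin k) => ψ i p.1 p.2)
    (Icc 0 T ×ˢ univ)
  g_cont : ∀ i j, ContinuousOn (fun p : ℝ × EuclideanSpace ℝ (Fin k) => g i j p.1 p.2)
    (Icc 0 T ×ˢ univ)
  ψ_int : ∀ i, Integrable (fun ω => ∫ s in Icc (0 : ℝ) T, (ψ i s (X s ω)) ^ 2) μ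
  g_int : ∀ i j, Integrable (fun ω => ⨆ t : Icc (0 : ℝ) T, (g i j (t : ℝ) (X (t : ℝ) ω)) ^ 2) μ
  Y_int : ∀ i, Integrable (fun ω => ⨆ t : Icc (0 : ℝ) T, (Y i (t : ℝ) ω) ^ 2) μ
  g_diag : ∀ i, ∀ t ∈ Icc (0 : ℝ) T, ∀ x, g i i t x = 0
  g_nonneg : ∀ i j, ∀ t ∈ Icc (0 : ℝ) T, ∀ x, 0 ≤ g i j t x
  g_triangle : ∀ i j l, j ≠ i → l ≠ i → l ≠ j → ∀ t ∈ Icc (0 : ℝ) T, ∀ x,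
    g i l t x < g i j t x + g j l t x
  g_alpha : ∀ i j, i ≠ j → ∀ t ∈ Icc (0 : ℝ) T, ∀ x, α < g i j t x + g j i t x
  Y_cont : ∀ i ω, ContinuousOn (fun t => Y i t ω) (Icc 0 T)
  Y_adapted : ∀ i, ∀ t : ℝ, Measurable[ℱ t] (Y i t)
  Y_T : ∀ i ω, Y i T ω = 0
  snell : SnellSystem T μ ℱ X ψ g Y

section CostCycles

variable {ι : Type*} {c : ι → ι → ℝ} {α : ℝ}

theorem cost_le_sum_Ico_of_triangle (hdiag : ∀ i, c i i = 0)
    (htri : ∀ i j l, c i l ≤ c i j + c j l) (u : ℕ → ι) {p r : ℕ} (hpr : p ≤ r) :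
    c (u p) (u r) ≤ ∑ q ∈ Finset.Ico p r, c (u q) (u (q + 1)) := by
  induction r, hpr using Nat.le_induction with
  | base => simp [hdiag]
  | succ r hpr ih =>
    rw [Finset.sum_Ico_succ_top hpr]
    linarith [htri (u p) (u r) (u (r + 1))]

theorem lt_sum_Ico_of_cycle (hdiag : ∀ i, c i i = 0)
    (htri : ∀ i j l, c i l ≤ c i j + c j l) (hα : ∀ i j, i ≠ j → α < c i j + c j i)
    (u : ℕ → ι) {p r : ℕ} (hpr : p < r) (hstep : u (p + 1) ≠ u p) (hcycle : u r = u p) :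
    α < ∑ q ∈ Finset.Ico p r, c (u q) (u (q + 1)) := by
  have hreturn := cost_le_sum_Ico_of_triangle hdiag htri u (Nat.succ_le_of_lt hpr)
  rw [hcycle] at hreturn
  rw [Finset.sum_eq_sum_Ico_succ_bot hpr]
  linarith [hα (u p) (u (p + 1)) hstep.symm]

theorem lt_sum_Ico_of_card_le [Fintype ι] (hnonneg : ∀ i j, 0 ≤ c i j)
    (hdiag : ∀ i, c i i = 0) (htri : ∀ i j l, c i l ≤ c i j + c j l)
    (hα : ∀ i j, i ≠ j → α < c i j + c j i) (u : ℕ → ι) (a : ℕ) {N : ℕ}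
    (hN : Fintype.card ι ≤ N) (hswitch : ∀ q, a ≤ q → q < a + N → u (q + 1) ≠ u q) :
    α < ∑ q ∈ Finset.Ico a (a + N), c (u q) (u (q + 1)) := by
  obtain ⟨x, hx, y, hy, hxy, hrepeat⟩ :=
    Finset.exists_ne_map_eq_of_card_lt_of_maps_to (t := Finset.univ)
      (s := Finset.Icc a (a + N)) (by rw [Finset.card_univ, Nat.card_Icc]; omega) (f := u)
      fun _ _ => Finset.mem_univ _
  obtain ⟨p, r, hpr, hpa, hrN, hcycle⟩ :
      ∃ p r, p < r ∧ a ≤ p ∧ r ≤ a + N ∧ u r = u p := by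
    simp only [Finset.mem_Icc] at hx hy
    rcases Nat.lt_or_gt_of_ne hxy with h | h
    · exact ⟨x, y, h, hx.1, hy.2, hrepeat.symm⟩
    · exact ⟨y, x, h, hy.1, hx.2, hrepeat⟩
  calc α < ∑ q ∈ Finset.Ico p r, c (u q) (u (q + 1)) :=
        lt_sum_Ico_of_cycle hdiag htri hα u hpr (hswitch p hpa (by omega)) hcycle
    _ ≤ ∑ q ∈ Finset.Ico a (a + N), c (u q) (u (q + 1)) :=
        Finset.sum_le_sum_of_subset_of_nonneg (Finset.Ico_subset_Ico hpa hrN)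
          fun _ _ _ => hnonneg _ _

theorem mul_le_sum_range_of_card_le [Fintype ι] (hnonneg : ∀ i j, 0 ≤ c i j)
    (hdiag : ∀ i, c i i = 0) (htri : ∀ i j l, c i l ≤ c i j + c j l)
    (hα : ∀ i j, i ≠ j → α < c i j + c j i) (u : ℕ → ι) {N : ℕ}
    (hN : Fintype.card ι ≤ N) (n : ℕ) (hswitch : ∀ q < n * N, u (q + 1) ≠ u q) :
    α * n ≤ ∑ q ∈ Finset.range (n * N), c (u q) (u (q + 1)) := by
  induction n with
  | zero => simp
  | succ n ih =>
    have hsplit : (n + 1) * N = n * N + N := by ring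
    rw [hsplit, ← Finset.sum_range_add_sum_Ico _ (Nat.le_add_right _ _)]
    have hfirst := ih fun q hq => hswitch q (by rw [hsplit]; omega)
    have hlast := lt_sum_Ico_of_card_le hnonneg hdiag htri hα u (n * N) hN
      fun q _ hq => hswitch q (by rw [hsplit]; exact hq)
    push_cast
    linarith

end CostCycles

variable {μ : Measure Ω} {X : ℝ → Ω → EuclideanSpace ℝ (Fin k)}
  {ψ : Fin m → ℝ → EuclideanSpace ℝ (Fin k) → ℝ}
  {g : Fin m → Fin m → ℝ → EuclideanSpace ℝ (Fin k) → ℝ} {Y : Fin m → ℝ → Ω → ℝ} {α : ℝ}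

theorem Hyps.g_triangle_le (H : Hyps T α μ ℱ X ψ g Y) {t : ℝ} (ht : t ∈ Icc 0 T)
    (x : EuclideanSpace ℝ (Fin k)) (i j l : Fin m) :
    g i l t x ≤ g i j t x + g j l t x := by
  by_cases hji : j = i
  · simp [hji, H.g_diag i t ht x]
  by_cases hlj : l = j
  · simp [hlj, H.g_diag j t ht x]
  by_cases hli : l = i
  · rw [hli, H.g_diag i t ht x]
    linarith [H.g_nonneg i j t ht x, H.g_nonneg j i t ht x]
  exact (H.g_triangle i j l hji hli hlj t ht x).le

/-- **Block lower bound for constant switching costs.**  If every switching cost `g_{ij}` is a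
constant, then for the optimal strategy `(δ*,u*)` and every `n ≥ 1`, almost surely
`Σ_{q=1}^{nm} g_{u*_{q-1} u*_q} 1_{[τ*_q<T]} ≥ α n 1_{[τ*_{nm}<T]}`. -/
theorem block_lower_bound_constant_costs
    {Ω : Type*} {m0 : MeasurableSpace Ω} {k m : ℕ} {T α : ℝ}
    {μ : Measure Ω} {ℱ : Filtration ℝ m0}
    {X : ℝ → Ω → EuclideanSpace ℝ (Fin k)}
    {ψ : Fin m → ℝ → EuclideanSpace ℝ (Fin k) → ℝ}
    (gc : Fin m → Fin m → ℝ)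
    {Y : Fin m → ℝ → Ω → ℝ}
    (H : Hyps T α μ ℱ X ψ (fun i j _ _ => gc i j) Y)
    (i0 : Fin m)
    (S : OptStrat T ℱ X (fun i j _ _ => gc i j) Y i0) :
    ∀ n : ℕ, 1 ≤ n →
      ∀ᵐ ω ∂μ,
        indicator {ω' | S.τ (n * m) ω' < T} (fun _ => α * n) ω ≤
          ∑ q ∈ Finset.range (n * m),
            indicator {ω' | S.τ (q + 1) ω' < T}
              (fun ω' => gc (S.ξ q ω') (S.ξ (q + 1) ω')) ω := by
  intro n _
  refine Eventually.of_forall fun ω => ?_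
  -- The cost hypotheses only hold on `[0, T]`, which contains `τ₀`.
  have ht := S.τ_mem 0 ω
  have hnonneg : ∀ i j, 0 ≤ gc i j := fun i j => H.g_nonneg i j _ ht 0
  by_cases hτ : S.τ (n * m) ω < T
  · have hτq : ∀ q < n * m, S.τ (q + 1) ω < T := fun q hq =>
      (S.τ_mono ω (Nat.succ_le_of_lt hq)).trans_lt hτ
    rw [indicator_of_mem (s := {ω' | S.τ (n * m) ω' < T}) hτ,
      Finset.sum_congr rfl fun q hq =>
        indicator_of_mem (s := {ω' | S.τ (q + 1) ω' < T}) (hτq q (Finset.mem_range.mp hq)) _]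
    exact mul_le_sum_range_of_card_le hnonneg (fun i => H.g_diag i _ ht 0)
      (H.g_triangle_le ht 0) (fun i j hij => H.g_alpha i j hij _ ht 0) (S.ξ · ω)
      (Fintype.card_fin m).le n fun q hq => S.switch_ne q ω (hτq q hq)
  · rw [indicator_of_notMem (s := {ω' | S.τ (n * m) ω' < T}) hτ]
    exact Finset.sum_nonneg fun q _ => indicator_nonneg (fun _ _ => hnonneg _ _) ω

end Switching

end
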